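/- arXiv:0807.2058 — 2 statements merged into one kernel-verified Lean document; each statement's English description precedes it below -/
import Mathlib

section
/- Let R be an algebraic curvature tensor on an n-dimensional real inner product space (V,g) and k ≥ 1 an integer with 2k+2 ≤ n. If R is (2k−2,k)-Einstein, i.e. c^{2k−2}R^k = λ·g² for some real λ, then h_{2k+2} = ( 2k(2k−1)/(n(n−1)) + (n−4k)/n )·h_{2k}·h_2. -/
/-!
Double forms on an `n`-dimensional real inner product space `(V, g)`, represented
by their components with respect to a (fixed) orthonormal basis: a `(p,q)`-double
form is determined by its values on pairs of increasingly ordered tuples of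
distinct basis vectors, i.e. by a function `Finset (Fin n) → Finset (Fin n) → ℝ`
(supported on pairs of sets of cardinalities `p` and `q`).
-/

open Finset

noncomputable section

abbrev DF (n : ℕ) := Finset (Fin n) → Finset (Fin n) → ℝ

namespace DF

variable {n : ℕ}

/-- The sign of the shuffle placing the increasing enumeration of `A` before that of
`B` and reordering increasingly. -/
def shuffleSign (A B : Finset (Fin n)) : ℝ :=
  (-1 : ℝ) ^ ∑ a ∈ A, (B.filter fun b => b < a).card

/-- The exterior product of double forms (Kulkarni–Nomizu type product), in components. -/
def mul (ω θ : DF n) : DF n := fun S T =>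
  ∑ A ∈ S.powerset, ∑ C ∈ T.powerset,
    shuffleSign A (S \ A) * shuffleSign C (T \ C) * ω A C * θ (S \ A) (T \ C)

/-- The `(0,0)`-double form `1`. -/
def one (n : ℕ) : DF n := fun S T => if S = ∅ ∧ T = ∅ then 1 else 0

/-- Powers `ω^k` of a double form with respect to the exterior product. -/
def pow (ω : DF n) : ℕ → DF n
  | 0 => one n
  | k + 1 => mul (pow ω k) ω

/-- The contraction `c ω`, obtained by summing, over an orthonormal basis, the
insertion of the basis vector as first argument in both slots. -/
def contr (ω : DF n) : DF n := fun S T =>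
  ∑ i : Fin n,
    if i ∈ S ∨ i ∈ T then 0
    else shuffleSign {i} S * shuffleSign {i} T * ω (insert i S) (insert i T)

/-- The iterated contraction `c^r`. -/
def contrN (r : ℕ) (ω : DF n) : DF n := contr^[r] ω

/-- The metric `g` as a `(1,1)`-double form (components in an orthonormal basis). -/
def gm (n : ℕ) : DF n := fun S T => if S = T ∧ S.card = 1 then 1 else 0

/-- The inner product of double forms induced by `g`. -/
def dinner (ω θ : DF n) : ℝ :=
  ∑ S : Finset (Fin n), ∑ T : Finset (Fin n), ω S T * θ S T

/-- The scalar given by a `(0,0)`-double form. -/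
def toScalar (ω : DF n) : ℝ := ω ∅ ∅

open scoped Classical in
/-- `σ_k` of a `(1,1)`-double form: the `k`-th elementary symmetric function of the
eigenvalues of the corresponding self-adjoint endomorphism (whose matrix in the
orthonormal basis is the matrix of components). -/
def sigma (k : ℕ) (ω : DF n) : ℝ :=
  if h : (Matrix.of fun i j => ω {i} {j} : Matrix (Fin n) (Fin n) ℝ).IsHermitian then
    ∑ s ∈ Finset.powersetCard k (Finset.univ : Finset (Fin n)), ∏ i ∈ s, h.eigenvalues i
  else 0

/-- `ω` is a `(p,p)`-double form: its components are supported in bidegree `(p,p)`. -/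
def IsDeg (p : ℕ) (ω : DF n) : Prop := ∀ S T, ω S T ≠ 0 → S.card = p ∧ T.card = p

/-- Symmetry of a double form: `ω(a;b) = ω(b;a)`. -/
def IsSymm (ω : DF n) : Prop := ∀ S T, ω S T = ω T S

/-- The first Bianchi identity for a `(p,p)`-double form (in components): the complete
antisymmetrization over the first `p+1` vector arguments vanishes. -/
def FirstBianchi (p : ℕ) (ω : DF n) : Prop :=
  ∀ U T : Finset (Fin n), U.card = p + 1 → T.card = p - 1 →
    ∑ i ∈ U,
      (if i ∈ T then 0
       else shuffleSign {i} (U.erase i) * shuffleSign {i} T * ω (U.erase i) (insert i T)) = 0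

end DF

section Geometry

variable {n : ℕ} {V : Type*} [NormedAddCommGroup V] [InnerProductSpace ℝ V]

/-- The components, in the orthonormal basis `e`, of a `(p,p)`-double form given as a
function of `p + p` vector arguments. -/
def ofForm (e : OrthonormalBasis (Fin n) ℝ V) (p : ℕ)
    (ω : (Fin p → V) → (Fin p → V) → ℝ) : DF n := fun S T =>
  if h : S.card = p ∧ T.card = p then
    ω (fun i => e ((S.orderIsoOfFin h.1 i : Fin n)))
      (fun i => e ((T.orderIsoOfFin h.2 i : Fin n)))
  else 0

/-- The components of a bilinear form, viewed as a `(1,1)`-double form. -/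
def ofBilin (e : OrthonormalBasis (Fin n) ℝ V) (b : V → V → ℝ) : DF n :=
  ofForm e 1 fun x y => b (x 0) (y 0)

/-- The components of a `(2,2)`-double form given as a function of four vectors. -/
def ofCurv (e : OrthonormalBasis (Fin n) ℝ V) (R : V → V → V → V → ℝ) : DF n :=
  ofForm e 2 fun x y => R (x 0) (x 1) (y 0) (y 1)

/-- Bilinearity of a real-valued function of two vector arguments. -/
def IsBilin (b : V → V → ℝ) : Prop :=
  (∀ (c : ℝ) (x x' y : V), b (c • x + x') y = c * b x y + b x' y) ∧
  (∀ (c : ℝ) (x y y' : V), b x (c • y + y') = c * b x y + b x y')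

/-- Symmetry of a bilinear form. -/
def IsSymmBilin (b : V → V → ℝ) : Prop := ∀ x y, b x y = b y x

/-- An algebraic curvature tensor: a multilinear form of four vectors, antisymmetric
in the first two arguments, symmetric under exchange of the two pairs, and satisfying
the first Bianchi identity. -/
structure IsCurv (R : V → V → V → V → ℝ) : Prop where
  linear : ∀ (c : ℝ) (x x' y z w : V), R (c • x + x') y z w = c * R x y z w + R x' y z w
  antisymm : ∀ x y z w, R x y z w = - R y x z w
  pair_symm : ∀ x y z w, R x y z w = R z w x y
  bianchi : ∀ x y z w, R x y z w + R y z x w + R z x y w = 0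

/-- Multilinearity of a real-valued function of `p` vector arguments. -/
def IsMultilinear (p : ℕ) (f : (Fin p → V) → ℝ) : Prop :=
  ∀ (x : Fin p → V) (i : Fin p) (c : ℝ) (u v : V),
    f (Function.update x i (c • u + v)) =
      c * f (Function.update x i u) + f (Function.update x i v)

/-- A function of `p` vector arguments is alternating. -/
def IsAlt (p : ℕ) (f : (Fin p → V) → ℝ) : Prop :=
  ∀ (x : Fin p → V) (i j : Fin p), i ≠ j → x i = x j → f x = 0

/-- A `(p,p)`-double form, as a function of `p + p` vector arguments:
multilinear and alternating in each of the two blocks of arguments. -/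
def IsDoubleForm (p : ℕ) (ω : (Fin p → V) → (Fin p → V) → ℝ) : Prop :=
  (∀ y, IsMultilinear p fun x => ω x y) ∧ (∀ y, IsAlt p fun x => ω x y) ∧
  (∀ x, IsMultilinear p fun y => ω x y) ∧ (∀ x, IsAlt p fun y => ω x y)

/-- Symmetry of a `(p,p)`-double form: `ω(x;y) = ω(y;x)`. -/
def IsSymmForm (p : ℕ) (ω : (Fin p → V) → (Fin p → V) → ℝ) : Prop := ∀ x y, ω x y = ω y x

/-- The first Bianchi identity for a `(p,p)`-double form of vector arguments:
the complete antisymmetrization over the first `p+1` vector arguments vanishes. -/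
def FirstBianchiForm (p : ℕ) (hp : 0 < p) (ω : (Fin p → V) → (Fin p → V) → ℝ) : Prop :=
  ∀ (z : Fin (p + 1) → V) (y : Fin p → V),
    ∑ σ : Equiv.Perm (Fin (p + 1)),
      ((Equiv.Perm.sign σ : ℤ) : ℝ) *
        ω (fun i => z (σ (Fin.castSucc i))) (Function.update y ⟨0, hp⟩ (z (σ (Fin.last p)))) = 0

/-- The scalar curvature `Scal = c²R` of a `(2,2)`-double form (in components). -/
def scalDF {n : ℕ} (Rd : DF n) : ℝ := DF.toScalar (DF.contrN 2 Rd)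

/-- The `2k`-th Gauss–Bonnet curvature `h_{2k} = c^{2k} R^k / (2k)!`. -/
def h2kDF {n : ℕ} (k : ℕ) (Rd : DF n) : ℝ :=
  DF.toScalar (DF.contrN (2 * k) (DF.pow Rd k)) / ((2 * k).factorial : ℝ)

/-- The second Gauss–Bonnet curvature `h₄ = c⁴ R² / 4!`. -/
def h4DF {n : ℕ} (Rd : DF n) : ℝ :=
  DF.toScalar (DF.contrN 4 (DF.pow Rd 2)) / (Nat.factorial 4 : ℝ)

end Geometry

end

/-!
Let `c_Y^m ω (S, T)` be the signed sum of the components `ω (E ∪ S, E ∪ T)` over the `m`-subsets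
`E` of an index set `Y`; for `Y` the complement of `S ∪ T` it is `(c^m ω)(S, T) / m!`.
Removing an index `x` from `Y` splits off the terms with `x ∈ E`, which form a contraction of
order one less with `x` moved into `S` and `T`; summed over `x ∈ Y` these terms count every `E`
exactly `m + 1` times.

Expanding the exterior product, `c^{2k+2}(R^k R) / (2k+2)!` is the sum of `R(B, D) Q(B, D)` over
pairs of 2-sets, where `Q(B, D)` is, up to sign, the contraction of `R^k` over the complement of
`B ∪ D` at `(D \ B, B \ D)`. The Einstein condition `c^{2k-2} R^k / (2k-2)! = (μ / 2) g²` fixes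
the contractions of `R^k` at all pairs of 2-sets, and the two rules above propagate it:
`Q(B, D) = 0` for `B ≠ D`, while by inclusion–exclusion `Q(B, B) = (n-2k)(n-2k-1) μ / (2k(2k-1))`
and `h_{2k} = n(n-1) μ / (2k(2k-1))`. Hence `h_{2k+2} = (n-2k)(n-2k-1) / (n(n-1)) · h_{2k} h_2`.
-/

theorem Finset.sum_powerset_sdiff {α M : Type*} [DecidableEq α] [AddCommMonoid M]
    (U : Finset α) (f : Finset α → M) :
    ∑ A ∈ U.powerset, f A = ∑ B ∈ U.powerset, f (U \ B) :=
  sum_nbij' (U \ ·) (U \ ·) (by simp) (by simp)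
    (fun A hA => Finset.sdiff_sdiff_eq_self (mem_powerset.1 hA))
    (fun B hB => Finset.sdiff_sdiff_eq_self (mem_powerset.1 hB))
    (fun A hA => by rw [Finset.sdiff_sdiff_eq_self (mem_powerset.1 hA)])

theorem Finset.compl_union_insert_eq_erase {α : Type*} [Fintype α] [DecidableEq α]
    {S T : Finset α} (y : α) :
    univ \ (insert y S ∪ insert y T) = (univ \ (S ∪ T)).erase y := by
  ext a
  simp only [mem_sdiff, mem_univ, mem_union, mem_insert, mem_erase, true_and]
  tauto

theorem Finset.card_inter_eq_one_of_card_eq_two {α : Type*} [DecidableEq α] {B D : Finset α}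
    (hB : #B = 2) (hD : #D = 2) (hBD : B ≠ D) (hdisj : ¬Disjoint B D) : #(B ∩ D) = 1 := by
  have hpos : #(B ∩ D) ≠ 0 := by rwa [Ne, card_eq_zero, ← disjoint_iff_inter_eq_empty]
  have hne : #(B ∩ D) ≠ 2 := fun h => hBD <| by
    have hB' : B ∩ D = B := eq_of_subset_of_card_le inter_subset_left (by omega)
    have hD' : B ∩ D = D := eq_of_subset_of_card_le inter_subset_right (by omega)
    rw [← hB', hD']
  have := card_le_card (inter_subset_left (s₁ := B) (s₂ := D))
  omega

namespace DF

variable {n : ℕ}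

local notation "s" => shuffleSign

theorem shuffleSign_mul_self (A B : Finset (Fin n)) : s A B * s A B = 1 := by
  rw [shuffleSign, ← pow_add]
  exact Even.neg_one_pow ⟨_, rfl⟩

@[simp]
theorem shuffleSign_empty_left (B : Finset (Fin n)) : s ∅ B = 1 := by
  simp [shuffleSign]

@[simp]
theorem shuffleSign_empty_right (A : Finset (Fin n)) : s A ∅ = 1 := by
  simp [shuffleSign]

theorem shuffleSign_union_left {A B : Finset (Fin n)} (C : Finset (Fin n)) (h : Disjoint A B) :
    s (A ∪ B) C = s A C * s B C := by
  rw [shuffleSign, shuffleSign, shuffleSign, ← pow_add, sum_union h]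

theorem shuffleSign_union_right (A : Finset (Fin n)) {B C : Finset (Fin n)} (h : Disjoint B C) :
    s A (B ∪ C) = s A B * s A C := by
  rw [shuffleSign, shuffleSign, shuffleSign, ← pow_add, ← sum_add_distrib]
  congr 1
  refine sum_congr rfl fun a _ => ?_
  rw [filter_union, card_union_of_disjoint (disjoint_filter_filter h)]

/-- The normalized contraction of `ω` over the basis vectors indexed by `Y`: for `Y` the
complement of `S ∪ T` this is the component `(c^m ω)(S, T) / m!`. -/
def contrOver (m : ℕ) (Y : Finset (Fin n)) (ω : DF n) (S T : Finset (Fin n)) : ℝ :=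
  ∑ E ∈ Y.powersetCard m, s E S * s E T * ω (E ∪ S) (E ∪ T)

theorem sum_powersetCard_filter_mem {m : ℕ} {Y S T : Finset (Fin n)} {x : Fin n} (ω : DF n)
    (hxY : x ∈ Y) (hxS : x ∉ S) (hxT : x ∉ T) :
    ∑ E ∈ (Y.powersetCard (m + 1)).filter (x ∈ ·), s E S * s E T * ω (E ∪ S) (E ∪ T) =
      s {x} S * s {x} T * contrOver m (Y.erase x) ω (insert x S) (insert x T) := by
  have hfilter : (Y.powersetCard (m + 1)).filter (x ∈ ·) =
      ((Y.erase x).powersetCard m).image (· ∪ {x}) := by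
    simpa [sdiff_singleton_eq_erase] using
      filter_powersetCard_subset {x} Y (m + 1) (by simpa using hxY) (by simp)
  have hx : ∀ E ∈ (Y.erase x).powersetCard m, x ∉ E := fun E hE hxE => by
    simpa using (mem_powersetCard.1 hE).1 hxE
  rw [hfilter, sum_image, contrOver, mul_sum]
  · refine sum_congr rfl fun E hE => ?_
    have hxE : Disjoint E {x} := disjoint_singleton_right.2 (hx E hE)
    rw [shuffleSign_union_left _ hxE, shuffleSign_union_left _ hxE, insert_eq, insert_eq,
      shuffleSign_union_right _ (disjoint_singleton_left.2 hxS),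
      shuffleSign_union_right _ (disjoint_singleton_left.2 hxT), union_assoc, union_assoc]
    linear_combination -(s {x} S * s E S * s {x} T * s E T * ω (E ∪ ({x} ∪ S)) (E ∪ ({x} ∪ T)))
      * shuffleSign_mul_self E {x}
  · intro E hE F hF hEF
    have h := congrArg (· \ {x}) hEF
    simp only at h
    rwa [union_sdiff_cancel_right (disjoint_singleton_right.2 (hx E hE)),
      union_sdiff_cancel_right (disjoint_singleton_right.2 (hx F hF))] at h

theorem contrOver_succ_eq_erase_add {m : ℕ} {Y S T : Finset (Fin n)} {x : Fin n} (ω : DF n)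
    (hxY : x ∈ Y) (hxS : x ∉ S) (hxT : x ∉ T) :
    contrOver (m + 1) Y ω S T = contrOver (m + 1) (Y.erase x) ω S T +
      s {x} S * s {x} T * contrOver m (Y.erase x) ω (insert x S) (insert x T) := by
  rw [← sum_powersetCard_filter_mem ω hxY hxS hxT, contrOver, contrOver,
    ← sum_filter_not_add_sum_filter _ (x ∈ ·)]
  congr 2
  ext E
  simp [mem_powersetCard, subset_erase, and_right_comm]

theorem succ_mul_contrOver_succ {m : ℕ} {Y S T : Finset (Fin n)} (ω : DF n)
    (hS : Disjoint Y S) (hT : Disjoint Y T) :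
    (m + 1 : ℝ) * contrOver (m + 1) Y ω S T =
      ∑ x ∈ Y, s {x} S * s {x} T * contrOver m (Y.erase x) ω (insert x S) (insert x T) := by
  rw [← sum_congr rfl fun x hx => sum_powersetCard_filter_mem ω hx
    (disjoint_left.1 hS hx) (disjoint_left.1 hT hx)]
  rw [sum_comm' (t' := Y.powersetCard (m + 1)) (s' := id) fun x E => by
    simp only [mem_filter, mem_powersetCard, id]
    exact ⟨fun h => ⟨h.2.2, h.2.1⟩, fun h => ⟨h.2.1 h.1, h.2, h.1⟩⟩]
  rw [contrOver, mul_sum]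
  refine sum_congr rfl fun E hE => ?_
  rw [sum_const, id, (mem_powersetCard.1 hE).2, nsmul_eq_mul]
  push_cast
  ring

theorem contrN_apply (m : ℕ) (ω : DF n) (S T : Finset (Fin n)) :
    contrN m ω S T = m.factorial * contrOver m (univ \ (S ∪ T)) ω S T := by
  induction m generalizing S T with
  | zero => simp [contrN, contrOver]
  | succ m ih =>
    have hdisj : Disjoint (univ \ (S ∪ T)) (S ∪ T) := disjoint_sdiff_self_left
    rw [contrN, Function.iterate_succ_apply', ← contrN, contr, Nat.factorial_succ, Nat.cast_mul,
      Nat.cast_succ, mul_comm _ (m.factorial : ℝ), mul_assoc,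
      succ_mul_contrOver_succ ω (hdisj.mono_right subset_union_left)
        (hdisj.mono_right subset_union_right), mul_sum,
      sum_ite, sum_const_zero, zero_add,
      show univ.filter (fun i => ¬(i ∈ S ∨ i ∈ T)) = univ \ (S ∪ T) by ext; simp]
    refine sum_congr rfl fun i _ => ?_
    rw [ih, compl_union_insert_eq_erase]
    ring

protected theorem one_mul (θ : DF n) : mul (one n) θ = θ := by
  ext S T
  simp [mul, one, ite_and, sum_ite_eq']

protected theorem pow_two (ω : DF n) : pow ω 2 = mul ω ω := by
  rw [pow, pow, pow, DF.one_mul]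

theorem pow_gm_two_apply (S T : Finset (Fin n)) :
    pow (gm n) 2 S T = if S = T ∧ #S = 2 then 2 else 0 := by
  rw [DF.pow_two, mul]
  split_ifs with h
  · obtain ⟨rfl, hS⟩ := h
    calc _ = ∑ A ∈ S.powerset, if #A = 1 then (1 : ℝ) else 0 := by
          refine sum_congr rfl fun A hA => ?_
          have hcard : #(S \ A) = 2 - #A := by rw [card_sdiff_of_subset (mem_powerset.1 hA), hS]
          rw [sum_eq_single A (fun C _ hCA => by simp [gm, Ne.symm hCA]) (by simp [hA])]
          by_cases hA1 : #A = 1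
          · simp [gm, hA1, hcard, shuffleSign_mul_self]
          · simp [gm, hA1]
      _ = 2 := by simp [sum_boole, ← powersetCard_eq_filter, hS]
  · refine sum_eq_zero fun A hA => sum_eq_zero fun C hC => ?_
    simp only [gm, mul_ite, mul_one, mul_zero]
    split_ifs with hAC hST <;> try rfl
    refine absurd ⟨?_, ?_⟩ h
    · rw [← union_sdiff_of_subset (mem_powerset.1 hA), ← union_sdiff_of_subset (mem_powerset.1 hC),
        hAC.1, hST.1]
    · rw [← card_sdiff_add_card_eq_card (mem_powerset.1 hA), hAC.2, hST.2]

theorem mul_apply_self (ω θ : DF n) (U : Finset (Fin n)) :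
    mul ω θ U U = ∑ B ∈ U.powerset, ∑ D ∈ U.powerset,
      θ B D * (s (U \ B) B * s (U \ D) D * ω (U \ B) (U \ D)) := by
  rw [mul, sum_powerset_sdiff]
  refine sum_congr rfl fun B hB => ?_
  rw [sum_powerset_sdiff]
  refine sum_congr rfl fun D hD => ?_
  rw [Finset.sdiff_sdiff_eq_self (mem_powerset.1 hB),
    Finset.sdiff_sdiff_eq_self (mem_powerset.1 hD)]
  ring

theorem contrOver_univ_empty (N : ℕ) (ω : DF n) :
    contrOver N univ ω ∅ ∅ = ∑ U ∈ univ.powersetCard N, ω U U := by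
  simp [contrOver]

theorem sum_superset_eq_contrOver {N : ℕ} {B D : Finset (Fin n)} (ω : DF n)
    (h : #(B ∪ D) ≤ N) :
    ∑ U ∈ (univ.powersetCard N).filter (B ∪ D ⊆ ·),
        s (U \ B) B * s (U \ D) D * ω (U \ B) (U \ D) =
      s (D \ B) B * s (B \ D) D *
        contrOver (N - #(B ∪ D)) (univ \ (B ∪ D)) ω (D \ B) (B \ D) := by
  have hinj : Set.InjOn (· ∪ (B ∪ D)) ↑((univ \ (B ∪ D)).powersetCard (N - #(B ∪ D))) := by
    intro G hG G' hG' hGG'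
    have hd : ∀ {G}, G ∈ (univ \ (B ∪ D)).powersetCard (N - #(B ∪ D)) → Disjoint G (B ∪ D) :=
      fun hG => disjoint_of_subset_left (mem_powersetCard.1 hG).1 sdiff_disjoint
    have h := congrArg (· \ (B ∪ D)) hGG'
    simp only at h
    rwa [union_sdiff_cancel_right (hd hG), union_sdiff_cancel_right (hd hG')] at h
  rw [filter_powersetCard_subset _ _ _ (subset_univ _) h, sum_image hinj, contrOver, mul_sum]
  refine sum_congr rfl fun G hG => ?_
  have hG : Disjoint G (B ∪ D) :=
    disjoint_of_subset_left (mem_powersetCard.1 hG).1 sdiff_disjoint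
  have hsplit : ∀ X Y : Finset (Fin n), Disjoint G (X ∪ Y) →
      (G ∪ (X ∪ Y)) \ X = G ∪ (Y \ X) ∧ s G X = s G (X \ Y) * s G (X ∩ Y) := by
    intro X Y hXY
    refine ⟨?_, ?_⟩
    · ext a
      have : a ∈ G → a ∉ X ∪ Y := fun h => disjoint_left.1 hXY h
      simp only [mem_sdiff, mem_union] at this ⊢
      tauto
    · conv_lhs => rw [← sdiff_union_inter X Y]
      exact shuffleSign_union_right _ (disjoint_sdiff_inter X Y)
  obtain ⟨hB, hsB⟩ := hsplit B D hG
  obtain ⟨hD, hsD⟩ := hsplit D B (union_comm B D ▸ hG)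
  rw [union_comm D B] at hD
  rw [hB, hD, shuffleSign_union_left _ (hG.mono_right (sdiff_subset.trans subset_union_right)),
    shuffleSign_union_left _ (hG.mono_right (sdiff_subset.trans subset_union_left)), hsB, hsD,
    inter_comm D B]
  linear_combination (s G (B \ D) * s (D \ B) B * s G (D \ B) * s (B \ D) D *
    ω (G ∪ (D \ B)) (G ∪ (B \ D))) * shuffleSign_mul_self G (B ∩ D)

theorem contrOver_univ_mul (N : ℕ) (ω θ : DF n) (hθ : ∀ B D, θ B D ≠ 0 → #(B ∪ D) ≤ N) :
    contrOver N univ (mul ω θ) ∅ ∅ = ∑ B, ∑ D, θ B D * (s (D \ B) B * s (B \ D) D *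
      contrOver (N - #(B ∪ D)) (univ \ (B ∪ D)) ω (D \ B) (B \ D)) := by
  rw [contrOver_univ_empty]
  simp_rw [mul_apply_self]
  rw [sum_comm' (t' := univ) (s' := fun B => (univ.powersetCard N).filter (B ⊆ ·))
    fun U B => by simp]
  refine sum_congr rfl fun B _ => ?_
  rw [sum_comm' (t' := univ)
    (s' := fun D => ((univ.powersetCard N).filter (B ⊆ ·)).filter (D ⊆ ·)) fun U D => by simp]
  refine sum_congr rfl fun D _ => ?_
  by_cases hBD : θ B D = 0
  · simp [hBD]
  rw [← mul_sum, ← sum_superset_eq_contrOver ω (hθ B D hBD), filter_filter]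
  simp only [union_subset_iff]

/-- The `(2,2)`-components of `c^m P / m!` are those of `(μ / 2) g²`. -/
def IsContrEinstein (m : ℕ) (μ : ℝ) (P : DF n) : Prop :=
  ∀ S T : Finset (Fin n), #S = 2 → #T = 2 →
    contrOver m (univ \ (S ∪ T)) P S T = if S = T then μ else 0

theorem isContrEinstein_of_contrN_eq {m : ℕ} {P : DF n} {lam : ℝ}
    (h : contrN m P = lam • pow (gm n) 2) :
    IsContrEinstein m (2 * lam / m.factorial) P := by
  intro S T hS _
  have hST := congr_fun (congr_fun h S) T
  rw [contrN_apply, Pi.smul_apply, Pi.smul_apply, pow_gm_two_apply, smul_eq_mul] at hST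
  have hfac : (m.factorial : ℝ) ≠ 0 := Nat.cast_ne_zero.2 m.factorial_ne_zero
  by_cases hST' : S = T
  · rw [if_pos ⟨hST', hS⟩] at hST
    rw [if_pos hST']
    field_simp
    linarith
  · rw [if_neg fun h => hST' h.1, mul_zero, mul_eq_zero] at hST
    rw [if_neg hST']
    exact hST.resolve_left hfac

section Einstein

variable {m : ℕ} {μ : ℝ} {P : DF n}

theorem IsContrEinstein.contrOver_singleton (hP : IsContrEinstein m μ P) (b : Fin n) :
    (m + 1 : ℝ) * contrOver (m + 1) (univ.erase b) P {b} {b} = (n - 1) * μ := by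
  have hdisj : Disjoint (univ.erase b) {b} := disjoint_singleton_right.2 (notMem_erase b univ)
  have hpair : ∀ x ∈ univ.erase b, contrOver m ((univ.erase b).erase x) P
      (insert x {b}) (insert x {b}) = μ := by
    intro x hx
    have hcard : #(insert x {b}) = 2 := card_pair (ne_of_mem_erase hx)
    rw [show (univ.erase b).erase x = univ \ (insert x {b} ∪ insert x {b}) by ext; simp,
      hP _ _ hcard hcard, if_pos rfl]
  rw [succ_mul_contrOver_succ P hdisj hdisj]
  rw [sum_congr rfl fun x hx => by rw [shuffleSign_mul_self, one_mul, hpair x hx], sum_const,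
    card_erase_of_mem (mem_univ b), card_univ, Fintype.card_fin, nsmul_eq_mul,
    Nat.cast_sub (Nat.one_le_of_lt b.is_lt), Nat.cast_one]

theorem IsContrEinstein.contrOver_univ (hP : IsContrEinstein m μ P) :
    (m + 1 : ℝ) * (m + 2) * contrOver (m + 2) univ P ∅ ∅ = n * (n - 1) * μ := by
  have h := succ_mul_contrOver_succ (m := m + 1) P (disjoint_empty_right univ)
    (disjoint_empty_right univ)
  simp only [shuffleSign_empty_right, one_mul, insert_empty] at h
  push_cast at h
  rw [mul_assoc, show (m : ℝ) + 2 = m + 1 + 1 by ring, h, mul_sum]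
  rw [sum_congr rfl fun x _ => hP.contrOver_singleton x, sum_const, card_univ,
    Fintype.card_fin, nsmul_eq_mul]
  ring

theorem IsContrEinstein.contrOver_compl_pair (hP : IsContrEinstein m μ P) {B : Finset (Fin n)}
    (hB : #B = 2) :
    (m + 1 : ℝ) * (m + 2) * contrOver (m + 2) (univ \ B) P ∅ ∅ =
      (n - m - 2) * (n - m - 3) * μ := by
  obtain ⟨b, c, hbc, rfl⟩ := card_eq_two.1 hB
  have hset : univ \ {b, c} = (univ.erase b).erase c := by ext; simp; tauto
  have hremove_b := contrOver_succ_eq_erase_add (m := m + 1) (S := ∅) (T := ∅) P (mem_univ b)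
    (notMem_empty b) (notMem_empty b)
  have hremove_c := contrOver_succ_eq_erase_add (m := m + 1) (S := ∅) (T := ∅) P
    (mem_erase.2 ⟨hbc.symm, mem_univ c⟩) (notMem_empty c) (notMem_empty c)
  have hremove_bc := contrOver_succ_eq_erase_add (m := m) (S := {c}) (T := {c}) P
    (mem_erase.2 ⟨hbc, mem_univ b⟩) (notMem_singleton.2 hbc) (notMem_singleton.2 hbc)
  have hpair : contrOver m ((univ.erase c).erase b) P (insert b {c}) (insert b {c}) = μ := by
    rw [show (univ.erase c).erase b = univ \ ({b, c} ∪ {b, c}) by ext; simp,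
      hP _ _ hB hB, if_pos rfl]
  simp only [shuffleSign_empty_right, one_mul, insert_empty, shuffleSign_mul_self, hpair]
    at hremove_b hremove_c hremove_bc
  rw [erase_right_comm] at hremove_bc
  simp only [show m + 1 + 1 = m + 2 from rfl] at hremove_b hremove_c
  -- inclusion–exclusion over the two indices `b`, `c` removed from the contraction range
  have hb := hP.contrOver_singleton b
  have hc := hP.contrOver_singleton c
  have htot := hP.contrOver_univ
  rw [hset]
  linear_combination (m + 1 : ℝ) * (m + 2) * (hremove_bc - hremove_c - hremove_b) + htot
    - (m + 2 : ℝ) * (hb + hc)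

theorem IsContrEinstein.contrOver_erase_eq_zero (hP : IsContrEinstein m μ P)
    {S T : Finset (Fin n)} (hS : #S = 1) (hT : #T = 1) (hST : S ≠ T) {x : Fin n}
    (hx : x ∉ S ∪ T) :
    contrOver (m + 1) ((univ \ (S ∪ T)).erase x) P S T = 0 := by
  have hdisj : Disjoint (univ \ (S ∪ T)) (S ∪ T) := disjoint_sdiff_self_left
  have hraise : ∀ y ∉ S ∪ T,
      contrOver m ((univ \ (S ∪ T)).erase y) P (insert y S) (insert y T) = 0 := by
    intro y hy
    rw [mem_union, not_or] at hy
    have hne : insert y S ≠ insert y T := fun h => hST <| by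
      rw [← erase_insert hy.1, h, erase_insert hy.2]
    rw [← compl_union_insert_eq_erase, hP _ _ (by rw [card_insert_of_notMem hy.1, hS])
      (by rw [card_insert_of_notMem hy.2, hT]), if_neg hne]
  -- the full `(m+1)`-contraction and the part split off at `x` both reduce to off-diagonal
  -- Einstein components
  have hfull : contrOver (m + 1) (univ \ (S ∪ T)) P S T = 0 := by
    have h := succ_mul_contrOver_succ (m := m) P (hdisj.mono_right subset_union_left)
      (hdisj.mono_right subset_union_right)
    rw [sum_eq_zero fun y hy => by rw [hraise y (mem_sdiff.1 hy).2, mul_zero]] at h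
    exact (mul_eq_zero.1 h).resolve_left (by positivity)
  obtain ⟨hxS, hxT⟩ : x ∉ S ∧ x ∉ T := by simpa using hx
  have h := contrOver_succ_eq_erase_add (m := m) P (mem_sdiff.2 ⟨mem_univ x, hx⟩) hxS hxT
  rwa [hfull, hraise x hx, mul_zero, add_zero, eq_comm] at h

theorem IsContrEinstein.contrOver_sdiff (hP : IsContrEinstein m μ P) {B D : Finset (Fin n)}
    (hB : #B = 2) (hD : #D = 2) :
    (m + 1 : ℝ) * (m + 2) * (s (D \ B) B * s (B \ D) D *
      contrOver (m + 4 - #(B ∪ D)) (univ \ (B ∪ D)) P (D \ B) (B \ D)) =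
      if B = D then (n - m - 2) * (n - m - 3) * μ else 0 := by
  by_cases hBD : B = D
  · subst hBD
    simpa [hB] using hP.contrOver_compl_pair hB
  rw [if_neg hBD]
  have hunion := card_union_add_card_inter B D
  by_cases hdisj : Disjoint B D
  · rw [sdiff_eq_self_of_disjoint hdisj.symm, sdiff_eq_self_of_disjoint hdisj,
      card_union_of_disjoint hdisj, hB, hD, show m + 4 - (2 + 2) = m by omega, union_comm,
      hP D B hD hB, if_neg (Ne.symm hBD)]
    simp
  have hcard := card_inter_eq_one_of_card_eq_two hB hD hBD hdisj
  obtain ⟨x, hx⟩ := card_eq_one.1 hcard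
  have hmem : ∀ a, a ∈ B ∧ a ∈ D ↔ a = x := fun a => by rw [← mem_inter, hx, mem_singleton]
  have hset : univ \ (B ∪ D) = (univ \ (D \ B ∪ B \ D)).erase x := by
    ext a
    have := hmem a
    simp only [mem_sdiff, mem_univ, mem_union, mem_erase, true_and]
    tauto
  have hxnot : x ∉ D \ B ∪ B \ D := by
    have := (hmem x).2 rfl
    simp only [mem_union, mem_sdiff]
    tauto
  have hDB : #(D \ B) = 1 := by rw [card_sdiff, hcard, hD]
  have hBD' : #(B \ D) = 1 := by rw [card_sdiff, inter_comm, hcard, hB]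
  have hne : D \ B ≠ B \ D := fun h => by
    obtain ⟨d, hd⟩ := card_pos.1 (by omega : 0 < #(D \ B))
    have hd' := h ▸ hd
    simp only [mem_sdiff] at hd hd'
    exact hd.2 hd'.1
  rw [show m + 4 - #(B ∪ D) = m + 1 by omega, hset,
    hP.contrOver_erase_eq_zero hDB hBD' hne hxnot, mul_zero, mul_zero]

theorem IsContrEinstein.contrOver_mul (hP : IsContrEinstein m μ P) {θ : DF n} (hθ : IsDeg 2 θ) :
    (m + 1 : ℝ) * (m + 2) * contrOver (m + 4) univ (mul P θ) ∅ ∅ =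
      (n - m - 2) * (n - m - 3) * μ * contrOver 2 univ θ ∅ ∅ := by
  have hunion : ∀ B D, θ B D ≠ 0 → #(B ∪ D) ≤ m + 4 := fun B D h =>
    (card_union_le B D).trans (by rw [(hθ B D h).1, (hθ B D h).2]; omega)
  rw [contrOver_univ_mul _ _ _ hunion, mul_sum]
  calc _ = ∑ B, θ B B * ((n - m - 2) * (n - m - 3) * μ) := sum_congr rfl fun B _ => by
        rw [mul_sum, sum_eq_single B]
        · by_cases h : θ B B = 0
          · simp [h]
          rw [mul_left_comm, hP.contrOver_sdiff (hθ B B h).1 (hθ B B h).2, if_pos rfl]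
        · intro D _ hDB
          by_cases h : θ B D = 0
          · simp [h]
          rw [mul_left_comm, hP.contrOver_sdiff (hθ B D h).1 (hθ B D h).2,
            if_neg (Ne.symm hDB), mul_zero]
        · simp
    _ = _ := by
        rw [contrOver_univ_empty, ← sum_mul, mul_comm]
        congr 1
        refine (sum_subset (subset_univ _) fun B _ hB => ?_).symm
        by_contra h
        exact hB (mem_powersetCard_univ.2 (hθ B B h).1)

end Einstein

end DF

theorem h2kDF_eq_contrOver {n : ℕ} (k : ℕ) (ω : DF n) :
    h2kDF k ω = DF.contrOver (2 * k) univ (DF.pow ω k) ∅ ∅ := by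
  simp [h2kDF, DF.toScalar, DF.contrN_apply, Nat.factorial_ne_zero]

theorem scalDF_eq_contrOver {n : ℕ} (ω : DF n) : scalDF ω = 2 * DF.contrOver 2 univ ω ∅ ∅ := by
  simp [scalDF, DF.toScalar, DF.contrN_apply]

theorem ofCurv_isDeg {n : ℕ} {V : Type*} [NormedAddCommGroup V] [InnerProductSpace ℝ V]
    (e : OrthonormalBasis (Fin n) ℝ V) (R : V → V → V → V → ℝ) : DF.IsDeg 2 (ofCurv e R) := by
  intro S T h
  by_contra hST
  exact h (dif_neg hST)

theorem stmt6_einstein_gaussBonnet_general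
    (n k : ℕ) (hk : 1 ≤ k) (hkn : 2 * k + 2 ≤ n)
    (V : Type*) [NormedAddCommGroup V] [InnerProductSpace ℝ V]
    (e : OrthonormalBasis (Fin n) ℝ V)
    (R : V → V → V → V → ℝ)
    (hEin : ∃ lam : ℝ,
      DF.contrN (2 * k - 2) (DF.pow (ofCurv e R) k) = lam • DF.pow (DF.gm n) 2) :
    h2kDF (k + 1) (ofCurv e R) =
      ((2 * (k : ℝ) * (2 * (k : ℝ) - 1)) / ((n : ℝ) * ((n : ℝ) - 1))
          + ((n : ℝ) - 4 * (k : ℝ)) / (n : ℝ)) *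
        h2kDF k (ofCurv e R) * (scalDF (ofCurv e R) / 2) := by
  obtain ⟨j, rfl⟩ : ∃ j, k = j + 1 := ⟨k - 1, by omega⟩
  obtain ⟨lam, hEin⟩ := hEin
  rw [show 2 * (j + 1) - 2 = 2 * j by omega] at hEin
  have hP := DF.isContrEinstein_of_contrN_eq hEin
  set μ := 2 * lam / ((2 * j).factorial : ℝ)
  have ha : (2 * j + 1 : ℝ) * (2 * j + 2) ≠ 0 := by positivity
  have hn : (4 : ℝ) ≤ n := by exact_mod_cast (by omega : 4 ≤ n)
  have hn0 : (n : ℝ) ≠ 0 := by linarith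
  have hn1 : (n : ℝ) - 1 ≠ 0 := by linarith
  have hlow := hP.contrOver_univ
  have hhigh := hP.contrOver_mul (ofCurv_isDeg e R)
  push_cast at hlow hhigh
  rw [h2kDF_eq_contrOver, h2kDF_eq_contrOver, scalDF_eq_contrOver,
    show 2 * (j + 1 + 1) = 2 * j + 4 by ring, show 2 * (j + 1) = 2 * j + 2 by ring, DF.pow,
    eq_div_of_mul_eq ha ((mul_comm _ _).trans hhigh),
    eq_div_of_mul_eq ha ((mul_comm _ _).trans hlow)]
  push_cast
  field_simp
  ring

/-- If `R` is `(2k−2,k)`-Einstein, i.e. `c^{2k−2}R^k = λ·g²`, with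
`k ≥ 1` and `2k+2 ≤ n`, then
`h_{2k+2} = (2k(2k−1)/(n(n−1)) + (n−4k)/n)·h_{2k}·h₂`. -/
theorem stmt6_einstein_gaussBonnet
    (n k : ℕ) (hk : 1 ≤ k) (hkn : 2 * k + 2 ≤ n)
    (V : Type*) [NormedAddCommGroup V] [InnerProductSpace ℝ V]
    (hV : Module.finrank ℝ V = n)
    (e : OrthonormalBasis (Fin n) ℝ V)
    (R : V → V → V → V → ℝ) (hR : IsCurv R)
    (hEin : ∃ lam : ℝ,
      DF.contrN (2 * k - 2) (DF.pow (ofCurv e R) k) = lam • DF.pow (DF.gm n) 2) :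
    h2kDF (k + 1) (ofCurv e R) =
      ((2 * (k : ℝ) * (2 * (k : ℝ) - 1)) / ((n : ℝ) * ((n : ℝ) - 1))
          + ((n : ℝ) - 4 * (k : ℝ)) / (n : ℝ)) *
        h2kDF k (ofCurv e R) * (scalDF (ofCurv e R) / 2) :=
  stmt6_einstein_gaussBonnet_general n k hk hkn V e R hEin
end

section
/- Conformal flatness characterization by a quadratic curvature invariant: let R be an algebraic curvature tensor on an n-dimensional real inner product space (V,g) with n ≥ 4. Then |R|² − |cR|²/(n−2) + (c²R)²/(2(n−1)(n−2)) = 0 if and only if the Weyl part of R vanishes, i.e. R = gB for some symmetric bilinear form B on V. -/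
/-!
Double forms on an `n`-dimensional real inner product space `(V, g)`, represented
by their components with respect to a (fixed) orthonormal basis: a `(p,q)`-double
form is determined by its values on pairs of increasingly ordered tuples of
distinct basis vectors, i.e. by a function `Finset (Fin n) → Finset (Fin n) → ℝ`
(supported on pairs of sets of cardinalities `p` and `q`).
-/

open Finset

/-!
Let `r` be the components of `R` in the basis `e`, `Ric` its Ricci contraction, `s = tr Ric`,
and `P = (Ric - s/(2(n-1)) g)/(n-2)` its Schouten tensor; then the Weyl tensor `W = r - g P` is
trace free. Pairing a tensor with the antisymmetries of `r` against a Kulkarni–Nomizu product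
`g b` only sees its Ricci contraction, `⟨r, g b⟩ = 4 ⟨Ric r, b⟩`, so `W` is orthogonal to every
`g b`. Hence `|W|² = ⟨W, r⟩ = |r|² - 4⟨Ric, P⟩`, which is four times the invariant, and the
invariant vanishes iff `r = g P`. Conversely, if `r = g b` then `W = g b - g P` is orthogonal to
itself.
-/

lemma Finset.sum_eq_sum_singleton {α M : Type*} [Fintype α] [DecidableEq α] [AddCommMonoid M]
    (f : Finset α → M) (hf : ∀ S : Finset α, S.card ≠ 1 → f S = 0) :
    ∑ S, f S = ∑ a, f {a} := by
  rw [← sum_subset (subset_univ (powersetCard 1 univ)) fun S _ hS => hf S (by simpa using hS),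
    powersetCard_one, sum_map]
  rfl

lemma Finset.card_filter_pair_eq {α : Type*} [Fintype α] [DecidableEq α] {S : Finset α}
    (hS : S.card = 2) :
    (univ.filter fun p : α × α => ({p.1, p.2} : Finset α) = S).card = 2 := by
  obtain ⟨a, b, hab, rfl⟩ := card_eq_two.1 hS
  have : (univ.filter fun p : α × α => ({p.1, p.2} : Finset α) = {a, b}) =
      {(a, b), (b, a)} := by
    ext ⟨x, y⟩
    simp [← coe_inj, Set.pair_eq_pair_iff]
  rw [this, card_pair (by simp [hab])]

lemma Finset.sum_pair_eq_two_mul_sum {α M : Type*} [Fintype α] [DecidableEq α] [Semiring M]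
    (f : Finset α → M) (hf : ∀ S : Finset α, S.card ≠ 2 → f S = 0) :
    ∑ a, ∑ b, f {a, b} = 2 * ∑ S, f S := by
  rw [← Fintype.sum_prod_type',
    ← sum_fiberwise' univ (fun p : α × α => ({p.1, p.2} : Finset α)), mul_sum]
  refine sum_congr rfl fun S _ => ?_
  rw [sum_const, nsmul_eq_mul]
  by_cases hS : S.card = 2
  · rw [card_filter_pair_eq hS, Nat.cast_ofNat]
  · rw [hf S hS, mul_zero, mul_zero]

lemma Finset.pair_sdiff_singleton_left {α : Type*} [DecidableEq α] {a b : α} (h : a ≠ b) :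
    ({a, b} : Finset α) \ {a} = {b} := by
  ext
  simp only [mem_sdiff, mem_insert, mem_singleton]
  grind

lemma Finset.pair_sdiff_singleton_right {α : Type*} [DecidableEq α] {a b : α} (h : a ≠ b) :
    ({a, b} : Finset α) \ {b} = {a} := by
  rw [pair_comm, pair_sdiff_singleton_left h.symm]

lemma Finset.orderEmbOfFin_pair {α : Type*} [LinearOrder α] {a b : α}
    (h : ({a, b} : Finset α).card = 2) :
    ({a, b} : Finset α).orderEmbOfFin h 0 = min a b ∧
      ({a, b} : Finset α).orderEmbOfFin h 1 = max a b :=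
  ⟨(orderEmbOfFin_zero h two_pos).trans (by simp),
    (orderEmbOfFin_last h two_pos).trans (by simp)⟩

noncomputable section

namespace CurvatureTensor

variable {n : ℕ}

def kulkarniNomizu (b : Matrix (Fin n) (Fin n) ℝ) (i j k l : Fin n) : ℝ :=
  (if i = k then b j l else 0) + (if j = l then b i k else 0)
    - (if i = l then b j k else 0) - (if j = k then b i l else 0)

def ricci (r : Fin n → Fin n → Fin n → Fin n → ℝ) : Matrix (Fin n) (Fin n) ℝ :=
  Matrix.of fun j l => ∑ i, r i j i l

lemma sum_ricci_mul (r : Fin n → Fin n → Fin n → Fin n → ℝ)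
    (b : Matrix (Fin n) (Fin n) ℝ) :
    ∑ j, ∑ l, ricci r j l * b j l = ∑ i, ∑ j, ∑ l, r i j i l * b j l := by
  simp only [ricci, Matrix.of_apply, sum_mul]
  exact (sum_congr rfl fun _ _ => sum_comm).trans sum_comm

lemma sum_mul_kulkarniNomizu {r : Fin n → Fin n → Fin n → Fin n → ℝ}
    (h₁ : ∀ i j k l, r i j k l = -r j i k l) (h₂ : ∀ i j k l, r i j k l = -r i j l k)
    (b : Matrix (Fin n) (Fin n) ℝ) :
    ∑ i, ∑ j, ∑ k, ∑ l, r i j k l * kulkarniNomizu b i j k l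
      = 4 * ∑ j, ∑ l, ricci r j l * b j l := by
  simp only [kulkarniNomizu, mul_add, mul_sub, sum_add_distrib, sum_sub_distrib, mul_ite,
    mul_zero, sum_ite_irrel, sum_const_zero, sum_ite_eq, mem_univ, if_true]
  have e₃ : ∀ i j l, r i j l i = -r i j i l := fun i j l => h₂ ..
  have e₄ : ∀ i j l, r i j j l = -r j i j l := fun i j l => h₁ ..
  have e₂ : ∑ i, ∑ j, ∑ l, r i j l j * b i l = ∑ i, ∑ j, ∑ l, r j i j l * b i l :=
    sum_congr rfl fun i _ => sum_congr rfl fun j _ => sum_congr rfl fun l _ => by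
      rw [h₁, h₂, neg_neg]
  simp only [e₂, e₃, e₄, neg_mul, sum_neg_distrib, sum_ricci_mul]
  rw [sum_comm (γ := Fin n) (f := fun i j => ∑ l, r j i j l * b i l)]
  ring

lemma ricci_kulkarniNomizu (b : Matrix (Fin n) (Fin n) ℝ) :
    ricci (kulkarniNomizu b) = ((n : ℝ) - 2) • b + b.trace • 1 := by
  ext j l
  simp only [ricci, kulkarniNomizu, Matrix.of_apply, sum_sub_distrib, sum_add_distrib, sum_const,
    card_univ, Fintype.card_fin, nsmul_eq_mul, sum_ite_irrel, sum_ite_eq,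
    sum_ite_eq', mem_univ, ↓reduceIte, Matrix.trace, Matrix.diag_apply, Matrix.add_apply,
    Matrix.smul_apply, smul_eq_mul, Matrix.one_apply, mul_ite, mul_one, mul_zero]
  ring

lemma ricci_sub (r s : Fin n → Fin n → Fin n → Fin n → ℝ) :
    ricci (r - s) = ricci r - ricci s := by
  ext j l
  simp [ricci, sum_sub_distrib]

lemma kulkarniNomizu_sub (b c : Matrix (Fin n) (Fin n) ℝ) :
    kulkarniNomizu (b - c) = kulkarniNomizu b - kulkarniNomizu c := by
  funext i j k l
  simp only [kulkarniNomizu, Pi.sub_apply, Matrix.sub_apply]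
  split_ifs <;> ring

lemma kulkarniNomizu_swap_left (b : Matrix (Fin n) (Fin n) ℝ) (i j k l : Fin n) :
    kulkarniNomizu b i j k l = -kulkarniNomizu b j i k l := by
  simp only [kulkarniNomizu]; ring

lemma kulkarniNomizu_swap_right (b : Matrix (Fin n) (Fin n) ℝ) (i j k l : Fin n) :
    kulkarniNomizu b i j k l = -kulkarniNomizu b i j l k := by
  simp only [kulkarniNomizu]; ring

def schouten (r : Fin n → Fin n → Fin n → Fin n → ℝ) : Matrix (Fin n) (Fin n) ℝ :=
  ((n : ℝ) - 2)⁻¹ • (ricci r - ((ricci r).trace / (2 * ((n : ℝ) - 1))) • 1)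

def weyl (r : Fin n → Fin n → Fin n → Fin n → ℝ) :
    Fin n → Fin n → Fin n → Fin n → ℝ :=
  r - kulkarniNomizu (schouten r)

lemma isSymm_schouten {r : Fin n → Fin n → Fin n → Fin n → ℝ}
    (h : ∀ i j k l, r i j k l = r k l i j) : (schouten r).IsSymm := by
  have : (ricci r).IsSymm :=
    Matrix.IsSymm.ext fun j l => by simp only [ricci, Matrix.of_apply, h _ l _ j]
  exact ((this.sub (Matrix.isSymm_one.smul _)).smul _)

lemma ricci_weyl (hn : 2 < n) (r : Fin n → Fin n → Fin n → Fin n → ℝ) :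
    ricci (weyl r) = 0 := by
  have : (2 : ℝ) < n := by exact_mod_cast hn
  have h₁ : (n : ℝ) - 1 ≠ 0 := by linarith
  have h₂ : (n : ℝ) - 2 ≠ 0 := by linarith
  rw [weyl, ricci_sub, ricci_kulkarniNomizu, sub_eq_zero]
  ext j l
  simp only [schouten, Matrix.trace_smul, Matrix.trace_sub, Matrix.trace_one, Fintype.card_fin,
    smul_eq_mul, Matrix.add_apply, Matrix.smul_apply, Matrix.sub_apply, Matrix.one_apply, mul_ite,
    mul_one, mul_zero]
  split_ifs <;> field_simp <;> ring

lemma sum_mul_kulkarniNomizu_eq_zero {w : Fin n → Fin n → Fin n → Fin n → ℝ}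
    (h₁ : ∀ i j k l, w i j k l = -w j i k l) (h₂ : ∀ i j k l, w i j k l = -w i j l k)
    (hw : ricci w = 0) (b : Matrix (Fin n) (Fin n) ℝ) :
    ∑ i, ∑ j, ∑ k, ∑ l, w i j k l * kulkarniNomizu b i j k l = 0 := by
  simp [sum_mul_kulkarniNomizu h₁ h₂, hw]

lemma sum_sq_eq_zero_iff (t : Fin n → Fin n → Fin n → Fin n → ℝ) :
    ∑ i, ∑ j, ∑ k, ∑ l, t i j k l ^ 2 = 0 ↔ t = 0 := by
  simp (disch := intros; positivity) [sum_eq_zero_iff_of_nonneg, funext_iff]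

lemma weyl_swap_left {r : Fin n → Fin n → Fin n → Fin n → ℝ}
    (h : ∀ i j k l, r i j k l = -r j i k l) (i j k l : Fin n) :
    weyl r i j k l = -weyl r j i k l := by
  simp only [weyl, Pi.sub_apply]
  rw [h, kulkarniNomizu_swap_left]; ring

lemma weyl_swap_right {r : Fin n → Fin n → Fin n → Fin n → ℝ}
    (h : ∀ i j k l, r i j k l = -r i j l k) (i j k l : Fin n) :
    weyl r i j k l = -weyl r i j l k := by
  simp only [weyl, Pi.sub_apply]
  rw [h, kulkarniNomizu_swap_right]; ring

lemma sum_ricci_mul_schouten (r : Fin n → Fin n → Fin n → Fin n → ℝ) :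
    ∑ j, ∑ l, ricci r j l * schouten r j l
      = ((∑ j, ∑ l, ricci r j l ^ 2) - (ricci r).trace ^ 2 / (2 * ((n : ℝ) - 1)))
        / ((n : ℝ) - 2) := by
  simp only [schouten, Matrix.smul_apply, Matrix.sub_apply, Matrix.one_apply, smul_eq_mul,
    mul_left_comm _ ((n : ℝ) - 2)⁻¹, ← mul_sum, mul_sub, sum_sub_distrib, mul_ite, mul_one,
    mul_zero, sum_ite_eq, mem_univ, if_true, ← sum_mul, Matrix.trace, Matrix.diag_apply, sq]
  ring

lemma sum_sq_weyl (hn : 2 < n) {r : Fin n → Fin n → Fin n → Fin n → ℝ}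
    (h₁ : ∀ i j k l, r i j k l = -r j i k l) (h₂ : ∀ i j k l, r i j k l = -r i j l k) :
    ∑ i, ∑ j, ∑ k, ∑ l, weyl r i j k l ^ 2
      = 4 * ((∑ i, ∑ j, ∑ k, ∑ l, r i j k l ^ 2) / 4
        - (∑ j, ∑ l, ricci r j l ^ 2) / ((n : ℝ) - 2)
        + (ricci r).trace ^ 2 / (2 * ((n : ℝ) - 1) * ((n : ℝ) - 2))) := by
  have hsplit : ∑ i, ∑ j, ∑ k, ∑ l, weyl r i j k l ^ 2
      = ∑ i, ∑ j, ∑ k, ∑ l, r i j k l ^ 2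
        - ∑ i, ∑ j, ∑ k, ∑ l, r i j k l * kulkarniNomizu (schouten r) i j k l
        - ∑ i, ∑ j, ∑ k, ∑ l, weyl r i j k l * kulkarniNomizu (schouten r) i j k l := by
    simp only [← sum_sub_distrib]
    refine sum_congr rfl fun i _ => sum_congr rfl fun j _ => sum_congr rfl fun k _ =>
      sum_congr rfl fun l _ => ?_
    simp only [weyl, Pi.sub_apply]; ring
  rw [hsplit, sum_mul_kulkarniNomizu h₁ h₂, sum_mul_kulkarniNomizu_eq_zero (weyl_swap_left h₁)
    (weyl_swap_right h₂) (ricci_weyl hn r), sum_ricci_mul_schouten]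
  have : (2 : ℝ) < n := by exact_mod_cast hn
  have h₁ : (n : ℝ) - 1 ≠ 0 := by linarith
  have h₂ : (n : ℝ) - 2 ≠ 0 := by linarith
  field_simp
  ring

lemma weyl_kulkarniNomizu (hn : 2 < n) (b : Matrix (Fin n) (Fin n) ℝ) :
    weyl (kulkarniNomizu b) = 0 := by
  have hw : weyl (kulkarniNomizu b) = kulkarniNomizu (b - schouten (kulkarniNomizu b)) :=
    (kulkarniNomizu_sub _ _).symm
  have h := sum_mul_kulkarniNomizu_eq_zero (weyl_swap_left (kulkarniNomizu_swap_left b))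
    (weyl_swap_right (kulkarniNomizu_swap_right b)) (ricci_weyl hn _)
    (b - schouten (kulkarniNomizu b))
  rw [← hw] at h
  simpa only [← sq, sum_sq_eq_zero_iff] using h

lemma weyl_eq_zero_iff (hn : 2 < n) {r : Fin n → Fin n → Fin n → Fin n → ℝ}
    (h : ∀ i j k l, r i j k l = r k l i j) :
    weyl r = 0 ↔ ∃ b : Matrix (Fin n) (Fin n) ℝ, b.IsSymm ∧ r = kulkarniNomizu b :=
  ⟨fun hw => ⟨schouten r, isSymm_schouten h, sub_eq_zero.1 hw⟩,
    by rintro ⟨b, -, rfl⟩; exact weyl_kulkarniNomizu hn b⟩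

end CurvatureTensor

end

open CurvatureTensor

namespace DF

variable {n : ℕ}

lemma shuffleSign_singleton (i j : Fin n) :
    shuffleSign {i} {j} = if j < i then -1 else 1 := by
  rw [shuffleSign, sum_singleton, filter_singleton]
  split <;> simp

lemma shuffleSign_empty (A : Finset (Fin n)) : shuffleSign A ∅ = 1 := by
  simp [shuffleSign]

lemma shuffleSign_singleton_mul_self (i j : Fin n) :
    shuffleSign {i} {j} * shuffleSign {i} {j} = 1 := by
  rw [shuffleSign_singleton]; split <;> norm_num

lemma shuffleSign_singleton_ne_zero (i j : Fin n) : shuffleSign {i} {j} ≠ 0 :=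
  left_ne_zero_of_mul_eq_one (shuffleSign_singleton_mul_self i j)

lemma shuffleSign_singleton_comm {i j : Fin n} (h : i ≠ j) :
    shuffleSign {j} {i} = -shuffleSign {i} {j} := by
  rcases h.lt_or_gt with h | h <;> simp [shuffleSign_singleton, h, h.not_gt]

lemma apply_min_max {f : Fin n → Fin n → ℝ} (hf : ∀ i j, f i j = -f j i) (i j : Fin n) :
    f (min i j) (max i j) = shuffleSign {i} {j} * f i j := by
  rcases le_or_gt i j with h | h
  · simp [shuffleSign_singleton, h, h.not_gt]
  · simp [shuffleSign_singleton, h, h.le, hf i j]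

lemma IsDeg.eq_zero {p : ℕ} {ω : DF n} (h : IsDeg p ω) {S T : Finset (Fin n)}
    (hST : ¬(S.card = p ∧ T.card = p)) : ω S T = 0 :=
  not_not.1 fun h' => hST (h S T h')

lemma IsDeg.contr {p : ℕ} {ω : DF n} (h : IsDeg (p + 1) ω) : IsDeg p (contr ω) := by
  intro S T hST
  obtain ⟨i, -, hi⟩ := exists_ne_zero_of_sum_ne_zero hST
  split_ifs at hi with hiST
  · exact absurd rfl hi
  rw [not_or] at hiST
  have := h _ _ (right_ne_zero_of_mul hi)
  rwa [card_insert_of_notMem hiST.1, card_insert_of_notMem hiST.2, Nat.add_right_cancel_iff,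
    Nat.add_right_cancel_iff] at this

lemma IsDeg.mul {p q : ℕ} {ω θ : DF n} (hω : IsDeg p ω) (hθ : IsDeg q θ) :
    IsDeg (p + q) (mul ω θ) := by
  intro S T hST
  obtain ⟨A, hA, hA'⟩ := exists_ne_zero_of_sum_ne_zero hST
  obtain ⟨C, hC, hC'⟩ := exists_ne_zero_of_sum_ne_zero hA'
  have h₁ := hω _ _ (right_ne_zero_of_mul (left_ne_zero_of_mul hC'))
  have h₂ := hθ _ _ (right_ne_zero_of_mul hC')
  rw [mem_powerset] at hA hC
  rw [← card_sdiff_add_card_eq_card hA, ← card_sdiff_add_card_eq_card hC]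
  omega

lemma isDeg_gm : IsDeg 1 (gm n) := by
  intro S T h
  simp only [gm, ne_eq, ite_eq_right_iff, not_forall] at h
  obtain ⟨⟨rfl, h⟩, -⟩ := h
  exact ⟨h, h⟩

lemma IsDeg.four_mul_dinner_eq_sum_pair {ω : DF n} (h : IsDeg 2 ω) (θ : DF n) :
    4 * dinner ω θ = ∑ a, ∑ b, ∑ c, ∑ d, ω {a, b} {c, d} * θ {a, b} {c, d} := by
  symm
  calc ∑ a, ∑ b, ∑ c, ∑ d, ω {a, b} {c, d} * θ {a, b} {c, d}
      = ∑ a, ∑ b, 2 * ∑ T, ω {a, b} T * θ {a, b} T :=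
        sum_congr rfl fun a _ => sum_congr rfl fun b _ =>
          sum_pair_eq_two_mul_sum (fun T => ω {a, b} T * θ {a, b} T) fun T hT => by
            rw [h.eq_zero fun h => hT h.2, zero_mul]
    _ = 2 * (2 * dinner ω θ) := by
        simp only [← mul_sum]
        rw [sum_pair_eq_two_mul_sum (fun S => ∑ T, ω S T * θ S T) fun S hS =>
          sum_eq_zero fun T _ => by rw [h.eq_zero fun h => hS h.1, zero_mul]]
        rfl
    _ = 4 * dinner ω θ := by ring

lemma IsDeg.dinner_eq_sum_singleton {ω : DF n} (h : IsDeg 1 ω) (θ : DF n) :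
    dinner ω θ = ∑ a, ∑ b, ω {a} {b} * θ {a} {b} := by
  rw [dinner, sum_eq_sum_singleton (fun S => ∑ T, ω S T * θ S T) fun S hS =>
    sum_eq_zero fun T _ => by rw [h.eq_zero fun h => hS h.1, zero_mul]]
  refine sum_congr rfl fun a _ => ?_
  rw [sum_eq_sum_singleton (fun T => ω {a} T * θ {a} T) fun T hT => by
    rw [h.eq_zero fun h => hT h.2, zero_mul]]

lemma contr_apply_empty (ω : DF n) : contr ω ∅ ∅ = ∑ i, ω {i} {i} := by
  simp [contr, shuffleSign_empty]

lemma mul_gm_apply (β : DF n) (S T : Finset (Fin n)) :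
    mul (gm n) β S T = ∑ a ∈ S ∩ T,
      shuffleSign {a} (S \ {a}) * shuffleSign {a} (T \ {a}) * β (S \ {a}) (T \ {a}) := by
  have hsupp : (S.powerset.filter fun A => A ∈ T.powerset ∧ A.card = 1) =
      powersetCard 1 (S ∩ T) := by
    ext A
    simp [mem_powersetCard, subset_inter_iff, and_assoc]
  simp only [mul, gm, mul_ite, mul_one, mul_zero, ite_mul, zero_mul, ite_and, sum_ite_eq]
  rw [← sum_filter, ← sum_filter, filter_filter, hsupp, powersetCard_one, sum_map]
  rfl

lemma ite_mem_pair_shuffleSign {k l : Fin n} (hkl : k ≠ l) (a : Fin n) (c : ℝ)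
    (f : Finset (Fin n) → ℝ) :
    (if a = k ∨ a = l then c * (shuffleSign {a} ({k, l} \ {a}) * f ({k, l} \ {a})) else 0)
      = c * shuffleSign {k} {l} *
          ((if a = k then f {l} else 0) - (if a = l then f {k} else 0)) := by
  by_cases hk : a = k
  · subst hk
    simp only [hkl, or_false, ↓reduceIte, pair_sdiff_singleton_left hkl, sub_zero]
    ring
  by_cases hl : a = l
  · subst hl
    simp only [hk, or_true, ↓reduceIte, pair_sdiff_singleton_right hkl,
      shuffleSign_singleton_comm hkl, zero_sub]
    ring
  simp only [hk, hl, or_self, ↓reduceIte, sub_self, mul_zero]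

lemma mul_gm_pair {β : DF n} (hβ : IsDeg 1 β) (i j k l : Fin n) :
    mul (gm n) β {i, j} {k, l} = shuffleSign {i} {j} * shuffleSign {k} {l} *
      kulkarniNomizu (Matrix.of fun p q => β {p} {q}) i j k l := by
  by_cases hij : i = j
  · subst hij
    rw [(isDeg_gm.mul hβ).eq_zero (by simp), kulkarniNomizu]
    ring
  by_cases hkl : k = l
  · subst hkl
    rw [(isDeg_gm.mul hβ).eq_zero (by simp), kulkarniNomizu]
    ring
  rw [mul_gm_apply, ← filter_mem_eq_inter, sum_filter, sum_pair hij]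
  simp only [mem_insert, mem_singleton, pair_sdiff_singleton_left hij,
    pair_sdiff_singleton_right hij, shuffleSign_singleton_comm hij, mul_assoc,
    ite_mem_pair_shuffleSign hkl, kulkarniNomizu, Matrix.of_apply]
  ring

end DF

noncomputable section Components

variable {n : ℕ} {V : Type*} [NormedAddCommGroup V] [InnerProductSpace ℝ V]
  (e : OrthonormalBasis (Fin n) ℝ V)

lemma IsCurv.antisymm_right {R : V → V → V → V → ℝ} (hR : IsCurv R) (x y z w : V) :
    R x y z w = -R x y w z := by
  rw [hR.pair_symm, hR.antisymm, hR.pair_symm w]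

lemma IsCurv.apply_self_left {R : V → V → V → V → ℝ} (hR : IsCurv R) (x z w : V) :
    R x x z w = 0 := by
  linarith [hR.antisymm x x z w]

lemma IsCurv.apply_self_right {R : V → V → V → V → ℝ} (hR : IsCurv R) (x y z : V) :
    R x y z z = 0 := by
  linarith [hR.antisymm_right x y z z]

def curvComponents (R : V → V → V → V → ℝ) (i j k l : Fin n) : ℝ :=
  R (e i) (e j) (e k) (e l)

def formMatrix (B : V → V → ℝ) : Matrix (Fin n) (Fin n) ℝ :=
  Matrix.of fun i j => B (e i) (e j)

lemma isDeg_ofForm (p : ℕ) (ω : (Fin p → V) → (Fin p → V) → ℝ) :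
    DF.IsDeg p (ofForm e p ω) := by
  intro S T h
  unfold ofForm at h
  split_ifs at h with hST
  · exact hST
  · exact absurd rfl h

lemma isDeg_ofCurv (R : V → V → V → V → ℝ) : DF.IsDeg 2 (ofCurv e R) := isDeg_ofForm e 2 _

lemma isDeg_ofBilin (B : V → V → ℝ) : DF.IsDeg 1 (ofBilin e B) := isDeg_ofForm e 1 _

variable {e} {R : V → V → V → V → ℝ}

lemma ofCurv_pair (hR : IsCurv R) (i j k l : Fin n) :
    ofCurv e R {i, j} {k, l} =
      DF.shuffleSign {i} {j} * DF.shuffleSign {k} {l} * curvComponents e R i j k l := by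
  by_cases hij : i = j
  · subst hij
    rw [(isDeg_ofCurv e R).eq_zero (by simp), curvComponents, hR.apply_self_left, mul_zero]
  by_cases hkl : k = l
  · subst hkl
    rw [(isDeg_ofCurv e R).eq_zero (by simp), curvComponents, hR.apply_self_right, mul_zero]
  have hS := card_pair hij
  have hT := card_pair hkl
  rw [ofCurv, ofForm, dif_pos ⟨hS, hT⟩]
  simp only [coe_orderIsoOfFin_apply, (orderEmbOfFin_pair hS).1, (orderEmbOfFin_pair hS).2,
    (orderEmbOfFin_pair hT).1, (orderEmbOfFin_pair hT).2]
  rw [DF.apply_min_max (f := fun a b => R (e a) (e b) (e (min k l)) (e (max k l)))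
      (fun a b => hR.antisymm ..),
    DF.apply_min_max (f := fun c d => R (e i) (e j) (e c) (e d)) (fun c d => hR.antisymm_right ..),
    curvComponents]
  ring

lemma contr_ofCurv_singleton (hR : IsCurv R) (j l : Fin n) :
    DF.contr (ofCurv e R) {j} {l} = ricci (curvComponents e R) j l := by
  refine sum_congr rfl fun i _ => ?_
  split_ifs with h
  · rcases h with h | h <;> rw [mem_singleton] at h <;> subst h
    · exact (hR.apply_self_left ..).symm
    · exact (hR.apply_self_right ..).symm
  · rw [ofCurv_pair hR]
    linear_combination (DF.shuffleSign {i} {l} * DF.shuffleSign {i} {l} *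
        curvComponents e R i j i l) * DF.shuffleSign_singleton_mul_self i j +
      curvComponents e R i j i l * DF.shuffleSign_singleton_mul_self i l

lemma dinner_ofCurv (hR : IsCurv R) :
    DF.dinner (ofCurv e R) (ofCurv e R)
      = (∑ i, ∑ j, ∑ k, ∑ l, curvComponents e R i j k l ^ 2) / 4 := by
  rw [eq_div_iff four_ne_zero, mul_comm, (isDeg_ofCurv e R).four_mul_dinner_eq_sum_pair]
  refine sum_congr rfl fun i _ => sum_congr rfl fun j _ => sum_congr rfl fun k _ =>
    sum_congr rfl fun l _ => ?_
  rw [ofCurv_pair hR]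
  linear_combination (DF.shuffleSign {k} {l} * DF.shuffleSign {k} {l} *
      curvComponents e R i j k l ^ 2) * DF.shuffleSign_singleton_mul_self i j +
    curvComponents e R i j k l ^ 2 * DF.shuffleSign_singleton_mul_self k l

lemma dinner_contr_ofCurv (hR : IsCurv R) :
    DF.dinner (DF.contrN 1 (ofCurv e R)) (DF.contrN 1 (ofCurv e R))
      = ∑ j, ∑ l, ricci (curvComponents e R) j l ^ 2 := by
  rw [DF.contrN, Function.iterate_one, (isDeg_ofCurv e R).contr.dinner_eq_sum_singleton]
  simp only [contr_ofCurv_singleton hR, sq]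

lemma toScalar_contrN_two_ofCurv (hR : IsCurv R) :
    DF.toScalar (DF.contrN 2 (ofCurv e R)) = (ricci (curvComponents e R)).trace := by
  rw [DF.toScalar, DF.contrN, Function.iterate_succ_apply', Function.iterate_one,
    DF.contr_apply_empty]
  simp only [contr_ofCurv_singleton hR]
  rfl

lemma ofBilin_singleton (B : V → V → ℝ) (i j : Fin n) :
    ofBilin e B {i} {j} = B (e i) (e j) := by
  rw [ofBilin, ofForm, dif_pos ⟨card_singleton i, card_singleton j⟩]
  simp

lemma mul_gm_ofBilin_pair (B : V → V → ℝ) (i j k l : Fin n) :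
    DF.mul (DF.gm n) (ofBilin e B) {i, j} {k, l} =
      DF.shuffleSign {i} {j} * DF.shuffleSign {k} {l} *
        kulkarniNomizu (formMatrix e B) i j k l := by
  rw [DF.mul_gm_pair (isDeg_ofBilin e B)]
  congr
  ext p q
  simp [ofBilin_singleton]

lemma ofCurv_eq_mul_gm_ofBilin_iff (hR : IsCurv R) (B : V → V → ℝ) :
    ofCurv e R = DF.mul (DF.gm n) (ofBilin e B) ↔
      curvComponents e R = kulkarniNomizu (formMatrix e B) := by
  constructor
  · intro h
    funext i j k l
    have := congrFun (congrFun h {i, j}) {k, l}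
    rw [ofCurv_pair hR, mul_gm_ofBilin_pair] at this
    exact mul_left_cancel₀ (mul_ne_zero (DF.shuffleSign_singleton_ne_zero i j)
      (DF.shuffleSign_singleton_ne_zero k l)) this
  · intro h
    funext S T
    by_cases hST : S.card = 2 ∧ T.card = 2
    · obtain ⟨i, j, -, rfl⟩ := card_eq_two.1 hST.1
      obtain ⟨k, l, -, rfl⟩ := card_eq_two.1 hST.2
      rw [ofCurv_pair hR, mul_gm_ofBilin_pair, h]
    · rw [(isDeg_ofCurv e R).eq_zero hST, (DF.isDeg_gm.mul (isDeg_ofBilin e B)).eq_zero hST]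

variable (e) in
lemma exists_formMatrix_eq {b : Matrix (Fin n) (Fin n) ℝ} (hb : b.IsSymm) :
    ∃ B : V → V → ℝ, IsBilin B ∧ IsSymmBilin B ∧ formMatrix e B = b := by
  refine ⟨fun x y => Matrix.toBilin e.toBasis b x y, ⟨fun c x x' y => ?_, fun c x y y' => ?_⟩,
    ((Matrix.isSymm_toBilin_iff_isSymm _).2 hb).eq, ?_⟩
  · simp only [map_add, map_smul, LinearMap.add_apply, LinearMap.smul_apply, smul_eq_mul]
  · simp only [map_add, map_smul, smul_eq_mul]
  ext i j
  simp [formMatrix]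

end Components

theorem stmt9_conformally_flat_characterization_general
    (n : ℕ) (hn : 4 ≤ n)
    (V : Type*) [NormedAddCommGroup V] [InnerProductSpace ℝ V]
    (e : OrthonormalBasis (Fin n) ℝ V)
    (R : V → V → V → V → ℝ) (hR : IsCurv R) :
    DF.dinner (ofCurv e R) (ofCurv e R)
        - DF.dinner (DF.contrN 1 (ofCurv e R)) (DF.contrN 1 (ofCurv e R)) / ((n : ℝ) - 2)
        + (DF.toScalar (DF.contrN 2 (ofCurv e R))) ^ 2 / (2 * ((n : ℝ) - 1) * ((n : ℝ) - 2))
      = 0 ↔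
      ∃ B : V → V → ℝ, IsBilin B ∧ IsSymmBilin B ∧
        ofCurv e R = DF.mul (DF.gm n) (ofBilin e B) := by
  have hn' : 2 < n := by omega
  rw [dinner_ofCurv hR, dinner_contr_ofCurv hR, toScalar_contrN_two_ofCurv hR,
    ← mul_eq_zero_iff_left four_ne_zero,
    ← sum_sq_weyl hn' (r := curvComponents e R) (fun _ _ _ _ => hR.antisymm ..)
      (fun _ _ _ _ => hR.antisymm_right ..),
    sum_sq_eq_zero_iff, weyl_eq_zero_iff hn' (r := curvComponents e R) fun _ _ _ _ =>
      hR.pair_symm ..]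
  constructor
  · rintro ⟨b, hb, hr⟩
    obtain ⟨B, hB, hBs, rfl⟩ := exists_formMatrix_eq e hb
    exact ⟨B, hB, hBs, (ofCurv_eq_mul_gm_ofBilin_iff hR B).2 hr⟩
  · rintro ⟨B, -, hBs, h⟩
    exact ⟨formMatrix e B, Matrix.IsSymm.ext fun i j => hBs _ _,
      (ofCurv_eq_mul_gm_ofBilin_iff hR B).1 h⟩

/-- **conformal flatness characterization.** For an algebraic curvature
tensor `R` on an `n`-dimensional real inner product space with `n ≥ 4`,
`|R|² − |cR|²/(n−2) + (c²R)²/(2(n−1)(n−2)) = 0` iff the Weyl part of `R` vanishes,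
i.e. `R = gB` for some symmetric bilinear form `B`. -/
theorem stmt9_conformally_flat_characterization
    (n : ℕ) (hn : 4 ≤ n)
    (V : Type*) [NormedAddCommGroup V] [InnerProductSpace ℝ V]
    (hV : Module.finrank ℝ V = n)
    (e : OrthonormalBasis (Fin n) ℝ V)
    (R : V → V → V → V → ℝ) (hR : IsCurv R) :
    DF.dinner (ofCurv e R) (ofCurv e R)
        - DF.dinner (DF.contrN 1 (ofCurv e R)) (DF.contrN 1 (ofCurv e R)) / ((n : ℝ) - 2)
        + (DF.toScalar (DF.contrN 2 (ofCurv e R))) ^ 2 / (2 * ((n : ℝ) - 1) * ((n : ℝ) - 2))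
      = 0 ↔
      ∃ B : V → V → ℝ, IsBilin B ∧ IsSymmBilin B ∧
        ofCurv e R = DF.mul (DF.gm n) (ofBilin e B) :=
  stmt9_conformally_flat_characterization_general n hn V e R hR
end
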